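/- arXiv:1206.6642 — 2 statements merged into one kernel-verified Lean document; each statement's English description precedes it below -/
import Mathlib

section
/- Let m ≥ 5 be a prime, let k and r be positive integers, let β be the unique integer with 0 ≤ β < m^k and 24β ≡ r (mod m^k), and set t = (r(m^{2k}−1) + 24β)/(24 m^k), which is a nonnegative integer. Let a(n) be the coefficients of the formal power series q^{r(m^{2k}−1)/24} · ∏_{j≥1}(1 − q^{m^k j})^{m^k r} · (∏_{j≥1}(1 − q^j))^{−r} ∈ ℤ[[q]]. Then, as formal power series over ℤ, Σ_{n≥0} a(m^k n) q^n = q^t · (Σ_{n≥0} p_r(m^k n + β) q^n) · ∏_{j≥1}(1 − q^j)^{m^k r}. -/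
open PowerSeries

/-- `eulerProd d` is the formal power series `∏_{j ≥ 1} (1 - q^(d*j))` over `ℤ`:
its `n`-th coefficient agrees with that of any sufficiently long finite partial product. -/
noncomputable def eulerProd (d : ℕ) : PowerSeries ℤ :=
  PowerSeries.mk fun n =>
    PowerSeries.coeff n (∏ j ∈ Finset.range (n + 1), (1 - (PowerSeries.X : PowerSeries ℤ) ^ (d * (j + 1))))

/-- `multipartition r n` is the number of `r`-component multipartitions of `n`,
i.e. the number of `r`-tuples of integer partitions whose sizes sum to `n`. -/
def multipartition (r n : ℕ) : ℕ :=
  ∑ c ∈ Finset.Nat.antidiagonalTuple r n, ∏ i, Fintype.card (Nat.Partition (c i))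

/-!
Substituting `q ↦ q^d` turns `∏ (1 - q^j)` into `∏ (1 - q^(d j))`, and a factor that is a power
series in `q^d` can be pulled out of Atkin's operator `U_d`. So `U_d` of the eta quotient is
`(∏ (1 - q^j))^(d r)` times `U_d (q^t' ∑ p_r(n) q^n)`, and the latter is `q^t ∑ p_r(d n + β) q^n`
because `d t = t' + β` with `β < d`. The remaining input is Euler's identity
`∏ (1 - q^j) · ∑ p(n) q^n = 1`, obtained by multiplying the two infinite products factor by factor:
each `1 - q^j` cancels the geometric series `∑ q^(j i)`.
-/
open Finset

theorem Finset.Nat.sum_antidiagonal_mul_left {M : Type*} [AddCommMonoid M] {d : ℕ} (hd : d ≠ 0)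
    (n : ℕ) (F : ℕ × ℕ → M) (hF : ∀ p ∈ antidiagonal (d * n), ¬ d ∣ p.1 → F p = 0) :
    ∑ p ∈ antidiagonal (d * n), F p = ∑ p ∈ antidiagonal n, F (d * p.1, d * p.2) := by
  have hinj : Set.InjOn (Prod.map (d * ·) (d * ·)) (antidiagonal n) := fun _ _ _ _ h ↦
    Prod.map_injective.2 ⟨mul_right_injective₀ hd, mul_right_injective₀ hd⟩ h
  refine Eq.trans ?_ (sum_image hinj)
  refine (sum_subset ?_ fun p hp hnot ↦ hF p hp fun ⟨a, ha⟩ ↦ hnot ?_).symm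
  · simp only [subset_iff, mem_image, HasAntidiagonal.mem_antidiagonal]
    rintro _ ⟨p, hp, rfl⟩
    simp [← mul_add, hp]
  · rw [HasAntidiagonal.mem_antidiagonal] at hp
    have han : a ≤ n := Nat.le_of_mul_le_mul_left (by omega) (Nat.pos_of_ne_zero hd)
    refine mem_image.2 ⟨(a, n - a), HasAntidiagonal.mem_antidiagonal.2 (by omega), ?_⟩
    ext
    · exact ha.symm
    · simp only [Nat.mul_sub]
      omega

namespace PowerSeries

variable {R : Type*}

theorem coeff_pow_eq_sum_antidiagonalTuple [CommSemiring R] (φ : R⟦X⟧) (r n : ℕ) :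
    coeff n (φ ^ r) = ∑ c ∈ Nat.antidiagonalTuple r n, ∏ i, coeff (c i) φ := by
  rw [← Fin.prod_const, coeff_prod, ← piAntidiag_univ_fin_eq_antidiagonalTuple, finsuppAntidiag,
    sum_map, ← sum_attach (piAntidiag univ n)]
  rfl

noncomputable def atkinU [Semiring R] (d : ℕ) (f : R⟦X⟧) : R⟦X⟧ := mk fun n ↦ coeff (d * n) f

theorem atkinU_expand_mul [CommRing R] {d : ℕ} (hd : d ≠ 0) (g f : R⟦X⟧) :
    atkinU d (expand d hd g * f) = g * atkinU d f := by
  ext n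
  rw [atkinU, coeff_mk, coeff_mul, coeff_mul, Finset.Nat.sum_antidiagonal_mul_left hd]
  · simp [atkinU]
  · intro p _ hp
    rw [coeff_expand_of_not_dvd _ _ _ hp, zero_mul]

theorem atkinU_X_pow_mul [Semiring R] {d t t' β : ℕ} (hβ : β < d) (h : d * t = t' + β)
    (f : R⟦X⟧) : atkinU d (X ^ t' * f) = X ^ t * mk fun n ↦ coeff (d * n + β) f := by
  ext n
  rw [atkinU, coeff_mk, ← commute_X_pow, coeff_mul_X_pow', ← commute_X_pow, coeff_mul_X_pow',
    coeff_mk]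
  by_cases hn : t ≤ n
  · obtain ⟨n, rfl⟩ := Nat.exists_eq_add_of_le hn
    rw [if_pos (by nlinarith), if_pos hn, Nat.add_sub_cancel_left, mul_add, h]
    congr 2
    omega
  · rw [if_neg, if_neg hn]
    have := Nat.mul_le_mul_left d (Nat.succ_le_of_lt (Nat.lt_of_not_le hn))
    rw [Nat.mul_succ] at this
    omega

end PowerSeries

theorem coeff_prod_eq_coeff_eulerProd {d : ℕ} (hd : d ≠ 0) {n : ℕ} {s : Finset ℕ}
    (hs : range (n + 1) ⊆ s) :
    coeff n (∏ j ∈ s, (1 - (X : ℤ⟦X⟧) ^ (d * (j + 1)))) = coeff n (eulerProd d) := by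
  rw [← prod_sdiff hs, mul_comm, coeff_mul_prod_one_sub_of_lt_order]
  · rw [eulerProd, coeff_mk]
  intro j hj
  have : n < j := by simpa using (mem_sdiff.1 hj).2
  rw [order_X_pow]
  exact_mod_cast this.trans_le
    ((Nat.le_succ j).trans (Nat.le_mul_of_pos_left _ (Nat.pos_of_ne_zero hd)))

theorem eulerProd_eq_expand {d : ℕ} (hd : d ≠ 0) : eulerProd d = expand d hd (eulerProd 1) := by
  ext n
  have hexp : ∏ j ∈ range (n + 1), (1 - (X : ℤ⟦X⟧) ^ (d * (j + 1)))
      = expand d hd (∏ j ∈ range (n + 1), (1 - X ^ (1 * (j + 1)))) := by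
    simp [map_prod, pow_mul]
  rw [← coeff_prod_eq_coeff_eulerProd hd subset_rfl, hexp, coeff_expand, coeff_expand]
  split_ifs
  · exact coeff_prod_eq_coeff_eulerProd one_ne_zero
      (range_subset_range.2 (Nat.succ_le_succ (Nat.div_le_self n d)))
  · rfl

noncomputable def partitionSeries : ℤ⟦X⟧ := mk fun n ↦ (Fintype.card n.Partition : ℤ)

theorem coeff_partitionSeries_pow (r n : ℕ) :
    coeff n (partitionSeries ^ r) = multipartition r n := by
  simp [coeff_pow_eq_sum_antidiagonalTuple, partitionSeries, multipartition]

section EulerProduct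

open PowerSeries.WithPiTopology

theorem hasProd_eulerProd {d : ℕ} (hd : d ≠ 0) :
    HasProd (fun j ↦ 1 - (X : ℤ⟦X⟧) ^ (d * (j + 1))) (eulerProd d) := by
  rw [HasProd, tendsto_iff_coeff_tendsto]
  exact fun n ↦ tendsto_atTop_of_eventually_const fun s hs ↦ coeff_prod_eq_coeff_eulerProd hd hs

theorem eulerProd_one_mul_partitionSeries : eulerProd 1 * partitionSeries = 1 := by
  have hP : HasProd (fun i ↦ ∑' j, (X : ℤ⟦X⟧) ^ ((i + 1) * j)) partitionSeries := by
    simpa [Nat.Partition.restricted, partitionSeries] using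
      Nat.Partition.hasProd_powerSeriesMk_card_restricted ℤ (fun _ ↦ True)
  refine ((hasProd_eulerProd one_ne_zero).mul hP).unique ?_
  simp_rw [one_mul, pow_mul]
  convert hasProd_one with i
  exact one_sub_mul_tsum_pow_of_constantCoeff_eq_zero (by simp)

end EulerProduct

theorem eta_quotient_U_operator_identity_general
    (m k r β t t' : ℕ) (hm : m.Prime)
    (hβ : β < m ^ k)
    (ht' : 24 * t' = r * (m ^ (2 * k) - 1))
    (ht : 24 * m ^ k * t = r * (m ^ (2 * k) - 1) + 24 * β)
    (u : (PowerSeries ℤ)ˣ) (hu : (u : PowerSeries ℤ) = eulerProd 1) :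
    (PowerSeries.mk fun n => PowerSeries.coeff (m ^ k * n)
        ((PowerSeries.X : PowerSeries ℤ) ^ t' * eulerProd (m ^ k) ^ (m ^ k * r)
          * ((u⁻¹ : (PowerSeries ℤ)ˣ) : PowerSeries ℤ) ^ r)) =
      (PowerSeries.X : PowerSeries ℤ) ^ t
        * (PowerSeries.mk fun n => (multipartition r (m ^ k * n + β) : ℤ))
        * eulerProd 1 ^ (m ^ k * r) := by
  have hd : m ^ k ≠ 0 := pow_ne_zero k hm.ne_zero
  have hinv : ((u⁻¹ : (PowerSeries ℤ)ˣ) : PowerSeries ℤ) = partitionSeries :=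
    Units.inv_eq_of_mul_eq_one_right (hu ▸ eulerProd_one_mul_partitionSeries)
  have hshift : m ^ k * t = t' + β := by
    have : 24 * (m ^ k * t) = 24 * (t' + β) := by rw [← mul_assoc, ht, ← ht', mul_add]
    omega
  change atkinU (m ^ k) _ = _
  rw [hinv, eulerProd_eq_expand hd, ← map_pow, mul_comm _ (expand _ _ _), mul_assoc,
    atkinU_expand_mul, atkinU_X_pow_mul hβ hshift]
  simp only [coeff_partitionSeries_pow]
  ring

theorem eta_quotient_U_operator_identity
    (m k r β t t' : ℕ) (hm : m.Prime) (hm5 : 5 ≤ m) (hk : 0 < k) (hr : 0 < r)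
    (hβ : β < m ^ k) (hβ24 : 24 * β ≡ r [MOD m ^ k])
    (ht' : 24 * t' = r * (m ^ (2 * k) - 1))
    (ht : 24 * m ^ k * t = r * (m ^ (2 * k) - 1) + 24 * β)
    (u : (PowerSeries ℤ)ˣ) (hu : (u : PowerSeries ℤ) = eulerProd 1) :
    (PowerSeries.mk fun n => PowerSeries.coeff (m ^ k * n)
        ((PowerSeries.X : PowerSeries ℤ) ^ t' * eulerProd (m ^ k) ^ (m ^ k * r)
          * ((u⁻¹ : (PowerSeries ℤ)ˣ) : PowerSeries ℤ) ^ r)) =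
      (PowerSeries.X : PowerSeries ℤ) ^ t
        * (PowerSeries.mk fun n => (multipartition r (m ^ k * n + β) : ℤ))
        * eulerProd 1 ^ (m ^ k * r) :=
  eta_quotient_U_operator_identity_general m k r β t t' hm hβ ht' ht u hu
end

section
/- For every nonnegative integer n, p_2(5n + 3) ≡ 0 (mod 5). -/
open Finset

lemma sum_antidiagonal_succ_eq_mul {R : Type*} [CommSemiring R] (a : ℕ → ℕ → R) (u v : R)
    (M : ℕ) (h_left : a 0 (M + 1) = v * a 0 M) (h_right : a (M + 1) 0 = u * a M 0)
    (h_pascal : ∀ k l, k + l + 1 = M → a (k + 1) (l + 1) = v * a (k + 1) l + u * a k (l + 1)) :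
    ∑ p ∈ antidiagonal (M + 1), a p.1 p.2 = (u + v) * ∑ p ∈ antidiagonal M, a p.1 p.2 := by
  let b : ℕ → ℕ → R := fun k l => if l = 0 then 0 else v * a k (l - 1)
  let c : ℕ → ℕ → R := fun k l => if k = 0 then 0 else u * a (k - 1) l
  have hsplit : ∀ p ∈ antidiagonal (M + 1), a p.1 p.2 = b p.1 p.2 + c p.1 p.2 := by
    rintro ⟨k, l⟩ hkl
    rw [HasAntidiagonal.mem_antidiagonal] at hkl
    rcases k with _ | k <;> rcases l with _ | l
    · omega
    · simp [b, c, show l = M by omega, h_left]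
    · simp [b, c, show k = M by omega, h_right]
    · simp [b, c, h_pascal k l (by omega)]
  rw [sum_congr rfl hsplit, sum_add_distrib, Nat.sum_antidiagonal_succ',
    Nat.sum_antidiagonal_succ, add_mul, mul_sum, mul_sum, add_comm]
  simp [b, c]

lemma sum_antidiagonal_two_mul_add_one {β : Type*} [AddCommMonoid β] (f : ℕ × ℕ → β) (N : ℕ) :
    ∑ p ∈ antidiagonal (2 * N + 1), f p =
      ∑ t ∈ range (N + 1), (f (N - t, N + 1 + t) + f (N + 1 + t, N - t)) := by
  rw [Nat.sum_antidiagonal_eq_sum_range_succ_mk, Nat.succ_eq_add_one,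
    show 2 * N + 1 + 1 = (N + 1) + (N + 1) by ring, sum_range_add, ← sum_range_reflect,
    ← sum_add_distrib]
  refine sum_congr rfl fun t ht => ?_
  have : t ≤ N := by grind
  rw [show N + 1 - 1 - t = N - t by omega, show 2 * N + 1 - (N - t) = N + 1 + t by omega,
    show 2 * N + 1 - (N + 1 + t) = N - t by omega]

lemma mul_add_choose_two_eq {N t : ℕ} (ht : t ≤ N) :
    N * (N + 1 + t) + (N - t).choose 2 = N * N + (N + 1).choose 2 + (t + 1).choose 2 ∧
      N * (N - t) + (N + 1 + t).choose 2 = N * N + (N + 1).choose 2 + (t + 1).choose 2 := by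
  obtain ⟨d, rfl⟩ := Nat.exists_eq_add_of_le ht
  rw [Nat.add_sub_cancel_left]
  constructor <;> apply Nat.cast_injective (R := ℚ) <;> push_cast [Nat.cast_choose_two] <;> ring

lemma five_dvd_two_mul_add_one_of_choose_two {t : ℕ} (h : (t + 1).choose 2 ≡ 3 [MOD 5]) :
    5 ∣ 2 * t + 1 := by
  have := Fact.mk Nat.prime_five
  have htri : (t + 1) * t = (t + 1).choose 2 * 2 := by simpa using Nat.add_one_mul_choose_eq t 1
  have hc : ((t + 1).choose 2 : ZMod 5) = 3 := (ZMod.natCast_eq_natCast_iff _ 3 5).mpr h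
  have hsq : ((2 * t + 1 : ℕ) : ZMod 5) ^ 2 = 0 :=
    calc ((2 * t + 1 : ℕ) : ZMod 5) ^ 2 = 4 * ((t + 1) * t : ℕ) + 1 := by push_cast; ring
      _ = 8 * ((t + 1).choose 2 : ℕ) + 1 := by rw [htri]; push_cast; ring
      _ = 0 := by rw [hc]; rfl
  exact (ZMod.natCast_eq_zero_iff _ 5).mp (pow_eq_zero_iff two_ne_zero |>.mp hsq)

section Polynomial

open Polynomial

noncomputable def qPochhammer (m : ℕ) : ℤ[X] := ∏ i ∈ range m, (1 - X ^ (i + 1))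

lemma qPochhammer_succ (m : ℕ) : qPochhammer (m + 1) = qPochhammer m * (1 - X ^ (m + 1)) :=
  prod_range_succ _ _

lemma qPochhammer_mul_prod_Ico {m n : ℕ} (h : m ≤ n) :
    qPochhammer m * ∏ i ∈ Ico m n, (1 - X ^ (i + 1)) = qPochhammer n :=
  prod_range_mul_prod_Ico _ h

lemma qPochhammer_ne_zero (m : ℕ) : qPochhammer m ≠ 0 := by
  refine prod_ne_zero_iff.mpr fun i _ h => ?_
  simpa using congrArg (eval 0) h

/-- `gaussBinom k l` is the Gaussian binomial coefficient `[k + l choose k]_q`. -/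
noncomputable def gaussBinom : ℕ → ℕ → ℤ[X]
  | 0, _ => 1
  | _ + 1, 0 => 1
  | k + 1, l + 1 => gaussBinom (k + 1) l + X ^ (l + 1) * gaussBinom k (l + 1)

@[simp] lemma gaussBinom_zero_left (l : ℕ) : gaussBinom 0 l = 1 := by rw [gaussBinom]

@[simp] lemma gaussBinom_zero_right (k : ℕ) : gaussBinom k 0 = 1 := by
  cases k <;> rw [gaussBinom]

lemma gaussBinom_succ_succ (k l : ℕ) :
    gaussBinom (k + 1) (l + 1) = gaussBinom (k + 1) l + X ^ (l + 1) * gaussBinom k (l + 1) := by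
  rw [gaussBinom]

lemma qPochhammer_mul_qPochhammer_mul_gaussBinom (k l : ℕ) :
    qPochhammer k * qPochhammer l * gaussBinom k l = qPochhammer (k + l) := by
  induction k generalizing l with
  | zero => simp [qPochhammer]
  | succ k ihk =>
    induction l with
    | zero => simp [qPochhammer]
    | succ l ihl =>
      have h := ihk (l + 1)
      rw [show k + 1 + l = k + l + 1 by ring, qPochhammer_succ k] at ihl
      rw [show k + (l + 1) = k + l + 1 by ring, qPochhammer_succ l] at h
      rw [gaussBinom_succ_succ, show k + 1 + (l + 1) = k + l + 1 + 1 by ring,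
        qPochhammer_succ (k + l + 1), qPochhammer_succ l, qPochhammer_succ k]
      linear_combination (1 - X ^ (l + 1)) * ihl + X ^ (l + 1) * (1 - X ^ (k + 1)) * h

lemma gaussBinom_comm (k l : ℕ) : gaussBinom k l = gaussBinom l k := by
  apply mul_left_cancel₀ (mul_ne_zero (qPochhammer_ne_zero k) (qPochhammer_ne_zero l))
  rw [qPochhammer_mul_qPochhammer_mul_gaussBinom, mul_comm (qPochhammer k),
    qPochhammer_mul_qPochhammer_mul_gaussBinom, add_comm]

/-- Cauchy's `q`-binomial theorem. -/
theorem prod_range_add_mul_pow_eq_sum_antidiagonal {R : Type*} [CommRing R] (q z w : R)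
    (M : ℕ) :
    ∏ j ∈ range M, (w + z * q ^ j) = ∑ p ∈ antidiagonal M, z ^ p.1 * w ^ p.2 *
      q ^ p.1.choose 2 * (gaussBinom p.1 p.2).eval₂ (Int.castRingHom R) q := by
  induction M with
  | zero => simp
  | succ M ih =>
    rw [prod_range_succ, ih, mul_comm, add_comm w]
    refine (sum_antidiagonal_succ_eq_mul (fun k l =>
      z ^ k * w ^ l * q ^ k.choose 2 * (gaussBinom k l).eval₂ (Int.castRingHom R) q)
      _ _ M ?_ ?_ ?_).symm
    · simp only [gaussBinom_zero_left, eval₂_one, Nat.choose_zero_succ, pow_zero, pow_succ]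
      ring
    · simp only [gaussBinom_zero_right, eval₂_one, Nat.choose_succ_succ', Nat.choose_one_right,
        pow_add, pow_succ]
      ring
    · intro k l hkl
      simp only [gaussBinom_succ_succ, ← hkl, eval₂_add, eval₂_mul, eval₂_X_pow, eval₂_X,
        Nat.choose_succ_succ', Nat.choose_one_right, pow_add, pow_succ]
      ring

section Jacobi

variable {R : Type*} [CommRing R]

lemma prod_pow_add_neg_mul_pow_eq (q z : R) (N : ℕ) :
    ∏ j ∈ range (2 * N + 1), (q ^ N + -z * q ^ j) =
      (-1) ^ N * q ^ (N * N + (N + 1).choose 2) *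
        ((1 - z) * ∏ i ∈ range N, ((z - q ^ (i + 1)) * (1 - z * q ^ (i + 1)))) := by
  have h_low : ∏ j ∈ range N, (q ^ N + -z * q ^ j) =
      (-1) ^ N * q ^ N.choose 2 * ∏ i ∈ range N, (z - q ^ (i + 1)) := by
    have h : ∀ j ∈ range N, q ^ N + -z * q ^ j = -1 * q ^ j * (z - q ^ (N - 1 - j + 1)) := by
      intro j hj
      rw [show N - 1 - j + 1 = N - j by grind]
      have : q ^ j * q ^ (N - j) = q ^ N := by rw [← pow_add]; grind
      linear_combination -this
    rw [prod_congr rfl h, prod_mul_distrib, prod_mul_distrib, prod_const, card_range,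
      prod_pow_eq_pow_sum, sum_range_id, ← Nat.choose_two_right,
      prod_range_reflect (fun i => z - q ^ (i + 1))]
  have h_high : ∏ j ∈ range (N + 1), (q ^ N + -z * q ^ (N + j)) =
      q ^ (N * N) * q ^ N * ((1 - z) * ∏ i ∈ range N, (1 - z * q ^ (i + 1))) := by
    have h : ∀ i ∈ range N, q ^ N + -z * q ^ (N + (i + 1)) = q ^ N * (1 - z * q ^ (i + 1)) := by
      intro i _
      rw [pow_add]
      ring
    rw [prod_range_succ', prod_congr rfl h, prod_mul_distrib, prod_const, card_range, ← pow_mul]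
    ring
  rw [two_mul, add_assoc, prod_range_add, h_low, h_high, Nat.choose_succ_succ',
    Nat.choose_one_right, prod_mul_distrib, pow_add, pow_add]
  ring

lemma cauchy_terms_pair_eq (q z a : R) {N t : ℕ} (ht : t ≤ N) :
    (-z) ^ (N - t) * (q ^ N) ^ (N + 1 + t) * q ^ (N - t).choose 2 * a +
        (-z) ^ (N + 1 + t) * (q ^ N) ^ (N - t) * q ^ (N + 1 + t).choose 2 * a =
      (-1) ^ N * q ^ (N * N + (N + 1).choose 2) * ((1 - z) * ((-1) ^ t * q ^ (t + 1).choose 2 *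
        a * (z ^ (N - t) * ∑ i ∈ range (2 * t + 1), z ^ i))) := by
  obtain ⟨h₁, h₂⟩ := mul_add_choose_two_eq ht
  set e := N * N + (N + 1).choose 2
  set c := (t + 1).choose 2
  have hq₁ : (q ^ N) ^ (N + 1 + t) * q ^ (N - t).choose 2 = q ^ e * q ^ c := by
    rw [← pow_mul, ← pow_add, h₁, pow_add]
  have hq₂ : (q ^ N) ^ (N - t) * q ^ (N + 1 + t).choose 2 = q ^ e * q ^ c := by
    rw [← pow_mul, ← pow_add, h₂, pow_add]
  have hz₁ : (-z) ^ (N - t) = (-1) ^ (N - t) * z ^ (N - t) := neg_pow z _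
  have hz₂ : (-z) ^ (N + 1 + t) = -((-1) ^ (N - t) * z ^ (N - t) * z ^ (2 * t + 1)) := by
    rw [show N + 1 + t = (N - t) + (2 * t + 1) by omega, pow_add, hz₁,
      Odd.neg_pow (odd_two_mul_add_one t)]
    ring
  have hsign : ((-1 : R)) ^ N * (-1) ^ t = (-1) ^ (N - t) := by
    rw [← pow_add, show N + t = (N - t) + 2 * t by omega, pow_add, pow_mul]
    simp
  have hgeom : (1 - z) * ∑ i ∈ range (2 * t + 1), z ^ i = 1 - z ^ (2 * t + 1) :=
    mul_neg_geom_sum z _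
  linear_combination (-z) ^ (N - t) * a * hq₁ + (-z) ^ (N + 1 + t) * a * hq₂
    + q ^ e * q ^ c * a * hz₁ + q ^ e * q ^ c * a * hz₂
    - (-1) ^ N * (-1) ^ t * q ^ e * q ^ c * a * z ^ (N - t) * hgeom
    - q ^ e * q ^ c * a * z ^ (N - t) * (1 - z ^ (2 * t + 1)) * hsign

end Jacobi

/-- A finite form of Jacobi's identity. -/
theorem qPochhammer_sq (N : ℕ) :
    qPochhammer N ^ 2 = ∑ t ∈ range (N + 1),
      C ((-1) ^ t * (2 * t + 1 : ℤ)) * X ^ (t + 1).choose 2 * gaussBinom (N + 1 + t) (N - t) := by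
  have hcauchy := prod_range_add_mul_pow_eq_sum_antidiagonal (C X : ℤ[X][X]) (-X) (C X ^ N)
    (2 * N + 1)
  rw [prod_pow_add_neg_mul_pow_eq, sum_antidiagonal_two_mul_add_one,
    sum_congr rfl fun t ht => by
      rw [gaussBinom_comm (N - t),
        cauchy_terms_pair_eq (C X : ℤ[X][X]) X _ (Nat.lt_succ_iff.mp (mem_range.mp ht))],
    ← mul_sum, ← mul_sum] at hcauchy
  have hX : (C X : ℤ[X][X]) ≠ 0 := C_ne_zero.mpr X_ne_zero
  have h1X : (1 - X : ℤ[X][X]) ≠ 0 := fun h => by simpa using congrArg (eval 0) h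
  have h := mul_left_cancel₀ h1X (mul_left_cancel₀ (by simp [hX]) hcauchy)
  have heval₂ (p : ℤ[X]) : p.eval₂ (Int.castRingHom ℤ[X][X]) (C X) = C p := by
    rw [show Int.castRingHom ℤ[X][X] = C.comp C from RingHom.ext_int _ _, ← hom_eval₂,
      eval₂_C_X]
  simp only [heval₂] at h
  have h' := congrArg (eval 1) h
  simp only [eval_prod, eval_finsetSum, eval_mul, eval_sub, eval_pow, eval_one, eval_X,
    eval_C, eval_neg, one_pow, one_mul, sum_const, card_range, nsmul_one] at h'
  rw [qPochhammer, sq, ← prod_mul_distrib, h']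
  refine sum_congr rfl fun t _ => ?_
  simp only [map_mul, map_add, map_pow, map_neg, map_one, map_ofNat, map_natCast]
  push_cast
  ring

lemma X_pow_dvd_prod_one_sub_X_pow_sub_one {R : Type*} [CommRing R] {m : ℕ} (s : Finset ℕ)
    (hs : ∀ i ∈ s, m ≤ i) : (X : R[X]) ^ (m + 1) ∣ ∏ i ∈ s, (1 - X ^ (i + 1)) - 1 := by
  classical
  induction s using Finset.induction_on with
  | empty => simp
  | insert a s ha ih =>
    rw [prod_insert ha]
    have hdvd : (X : R[X]) ^ (m + 1) ∣ X ^ (a + 1) :=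
      pow_dvd_pow X (by simpa using hs a (mem_insert_self a s))
    convert dvd_sub (ih fun i hi => hs i (mem_insert_of_mem hi))
      (hdvd.mul_right (∏ i ∈ s, (1 - X ^ (i + 1)))) using 1
    ring

lemma qPochhammer_mul_gaussBinom {k l m : ℕ} (hlm : l ≤ m) :
    qPochhammer m * gaussBinom k l =
      (∏ i ∈ Ico l m, (1 - X ^ (i + 1))) * ∏ i ∈ Ico k (k + l), (1 - X ^ (i + 1)) := by
  apply mul_left_cancel₀ (mul_ne_zero (qPochhammer_ne_zero k) (qPochhammer_ne_zero l))
  calc qPochhammer k * qPochhammer l * (qPochhammer m * gaussBinom k l)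
      = qPochhammer m * qPochhammer (k + l) := by
        rw [← qPochhammer_mul_qPochhammer_mul_gaussBinom]; ring
    _ = _ := by
        rw [← qPochhammer_mul_prod_Ico hlm, ← qPochhammer_mul_prod_Ico (Nat.le_add_right k l)]
        ring

lemma X_pow_dvd_qPochhammer_mul_gaussBinom_sub_one {k l m : ℕ} (hlm : l ≤ m) (hlk : l ≤ k) :
    X ^ (l + 1) ∣ qPochhammer m * gaussBinom k l - 1 := by
  have hA := X_pow_dvd_prod_one_sub_X_pow_sub_one (R := ℤ) (Ico l m) fun i hi => (mem_Ico.mp hi).1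
  have hB := X_pow_dvd_prod_one_sub_X_pow_sub_one (R := ℤ) (Ico k (k + l))
    fun i hi => hlk.trans (mem_Ico.mp hi).1
  rw [qPochhammer_mul_gaussBinom hlm]
  convert dvd_add (hA.mul_right (∏ i ∈ Ico k (k + l), (1 - X ^ (i + 1)))) hB using 1
  ring

noncomputable def jacobiPoly (N : ℕ) : ℤ[X] :=
  ∑ t ∈ range (N + 1), C ((-1) ^ t * (2 * t + 1 : ℤ)) * X ^ (t + 1).choose 2

theorem X_pow_dvd_qPochhammer_pow_three_sub_jacobiPoly (N : ℕ) :
    X ^ (N + 1) ∣ qPochhammer N ^ 3 - jacobiPoly N := by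
  rw [pow_succ (qPochhammer N) 2, qPochhammer_sq, jacobiPoly, sum_mul, ← sum_sub_distrib]
  refine dvd_sum fun t ht => ?_
  have htN : t ≤ N := Nat.lt_succ_iff.mp (mem_range.mp ht)
  have hexp : N + 1 ≤ (t + 1).choose 2 + (N - t + 1) := by
    rw [Nat.choose_succ_succ', Nat.choose_one_right]; omega
  have h := X_pow_dvd_qPochhammer_mul_gaussBinom_sub_one (k := N + 1 + t) (Nat.sub_le N t)
    (by omega)
  have : X ^ (N + 1) ∣
      X ^ (t + 1).choose 2 * (qPochhammer N * gaussBinom (N + 1 + t) (N - t) - 1) :=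
    (pow_dvd_pow X hexp).trans (by rw [pow_add]; exact mul_dvd_mul_left _ h)
  convert this.mul_left (C ((-1) ^ t * (2 * t + 1 : ℤ))) using 1
  ring

lemma five_dvd_coeff_jacobiPoly (N : ℕ) {b : ℕ} (hb : b ≡ 3 [MOD 5]) :
    (5 : ℤ) ∣ (jacobiPoly N).coeff b := by
  rw [jacobiPoly, finsetSum_coeff]
  refine dvd_sum fun t _ => ?_
  rw [coeff_C_mul_X_pow]
  split_ifs with h
  · subst h
    exact dvd_mul_of_dvd_right (by exact_mod_cast five_dvd_two_mul_add_one_of_choose_two hb) _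
  · exact dvd_zero 5

end Polynomial

open PowerSeries

lemma X_pow_dvd_prod_pow_three_sub_jacobiPoly (R : Type*) [CommRing R] (N : ℕ) :
    (X : R⟦X⟧) ^ (N + 1) ∣ (∏ i ∈ range N, (1 - X ^ (i + 1))) ^ 3 -
      ((jacobiPoly N).map (Int.castRingHom R) : R⟦X⟧) := by
  have := map_dvd ((Polynomial.coeToPowerSeries.ringHom).comp
    (Polynomial.mapRingHom (Int.castRingHom R))) (X_pow_dvd_qPochhammer_pow_three_sub_jacobiPoly N)
  rw [map_pow, map_sub, map_pow, qPochhammer, map_prod] at this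
  simpa using this

open PowerSeries.WithPiTopology in
lemma powerSeriesMk_card_restricted_le_mul_prod_one_sub_X_pow (R : Type*) [CommRing R] (N : ℕ) :
    mk (fun n => (#(Nat.Partition.restricted n (· ≤ N)) : R)) *
      ∏ i ∈ range N, (1 - X ^ (i + 1)) = 1 := by
  let _ : TopologicalSpace R := ⊥
  have : DiscreteTopology R := ⟨rfl⟩
  rw [Nat.Partition.powerSeriesMk_card_restricted_eq_tprod R (· ≤ N),
    tprod_eq_prod (s := range N) fun i hi => if_neg (by simpa using hi), ← prod_mul_distrib]
  refine prod_eq_one fun i hi => ?_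
  simp_rw [if_pos (show i + 1 ≤ N by simpa using hi), pow_mul]
  exact tsum_pow_mul_one_sub_of_constantCoeff_eq_zero (by simp)

lemma card_restricted_le_eq_card {m N : ℕ} (h : m ≤ N) :
    #(Nat.Partition.restricted m (· ≤ N)) = Fintype.card m.Partition := by
  rw [Nat.Partition.restricted, filter_true_of_mem fun p _ i hi => (p.le_of_mem_parts hi).trans h,
    card_univ]

lemma multipartition_two_eq_sum_antidiagonal (m : ℕ) :
    multipartition 2 m = ∑ p ∈ antidiagonal m,
      Fintype.card p.1.Partition * Fintype.card p.2.Partition := by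
  rw [multipartition, Finset.Nat.antidiagonalTuple_two, sum_map]
  refine sum_congr rfl fun p _ => ?_
  rw [Fin.prod_univ_two]
  rfl

lemma coeff_powerSeriesMk_card_restricted_sq (R : Type*) [CommRing R] {m N : ℕ} (h : m ≤ N) :
    coeff m (mk (fun n => (#(Nat.Partition.restricted n (· ≤ N)) : R)) ^ 2) =
      (multipartition 2 m : R) := by
  rw [sq, coeff_mul, multipartition_two_eq_sum_antidiagonal, Nat.cast_sum]
  refine sum_congr rfl fun p hp => ?_
  have hp : p.1 + p.2 = m := mem_antidiagonal.mp hp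
  rw [coeff_mk, coeff_mk, card_restricted_le_eq_card (by omega),
    card_restricted_le_eq_card (by omega), Nat.cast_mul]

lemma pow_prime_eq_expand {p : ℕ} [hp : Fact p.Prime] (f : (ZMod p)⟦X⟧) :
    f ^ p = expand p hp.out.ne_zero f := by
  have := MvPowerSeries.map_frobenius_expand (σ := Unit) p hp.out.ne_zero (f := f)
  rwa [ZMod.frobenius_zmod, MvPowerSeries.map_id, eq_comm] at this

lemma coeff_expand_mul_eq_zero {R : Type*} [CommRing R] {p r : ℕ} (hp : p ≠ 0) {g : R⟦X⟧}
    (hg : ∀ b, b ≡ r [MOD p] → coeff b g = 0) (f : R⟦X⟧) (n : ℕ) :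
    coeff (p * n + r) (expand p hp f * g) = 0 := by
  rw [coeff_mul]
  refine sum_eq_zero fun ab hab => ?_
  have hab : ab.1 + ab.2 = p * n + r := mem_antidiagonal.mp hab
  by_cases ha : p ∣ ab.1
  · rw [hg ab.2 ?_, mul_zero]
    obtain ⟨c, hc⟩ := ha
    rw [hc] at hab
    simpa [Nat.ModEq, Nat.mul_add_mod] using congrArg (· % p) hab
  · rw [coeff_expand_of_not_dvd p hp f ha, zero_mul]

theorem multipartition_two_five (n : ℕ) : 5 ∣ multipartition 2 (5 * n + 3) := by
  have := Fact.mk Nat.prime_five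
  set N := 5 * n + 3
  set P : (ZMod 5)⟦X⟧ := mk fun m => (#(Nat.Partition.restricted m (· ≤ N)) : ZMod 5)
  set E : (ZMod 5)⟦X⟧ := ∏ i ∈ range N, (1 - X ^ (i + 1))
  set J : (ZMod 5)⟦X⟧ := ((jacobiPoly N).map (Int.castRingHom (ZMod 5)) : (ZMod 5)⟦X⟧)
  have hPE : P * E = 1 := powerSeriesMk_card_restricted_le_mul_prod_one_sub_X_pow _ N
  have hJ : ∀ b, b ≡ 3 [MOD 5] → coeff b J = 0 := fun b hb => by
    rw [Polynomial.coeff_coe, Polynomial.coeff_map, eq_intCast,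
      ZMod.intCast_zmod_eq_zero_iff_dvd]
    exact five_dvd_coeff_jacobiPoly N hb
  have hdvd : X ^ (N + 1) ∣ P ^ 2 - expand 5 (by norm_num) P * J := by
    rw [← pow_prime_eq_expand]
    convert (X_pow_dvd_prod_pow_three_sub_jacobiPoly (ZMod 5) N).mul_left (P ^ 5) using 1
    linear_combination (-P ^ 2 * (P ^ 2 * E ^ 2 + P * E + 1)) * hPE
  have hcoeff := X_pow_dvd_iff.mp hdvd N (lt_add_one N)
  rw [map_sub, sub_eq_zero, coeff_powerSeriesMk_card_restricted_sq _ le_rfl,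
    coeff_expand_mul_eq_zero _ hJ] at hcoeff
  exact (ZMod.natCast_eq_zero_iff _ 5).mp hcoeff
end
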